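/- arXiv:2105.12813 — 2 statements merged into one kernel-verified Lean document; each statement's English description precedes it below -/
import Mathlib

section
/- For every pair of integers n, j with n ≥ 3 and 1 ≤ j ≤ n−2, and with N = C(n,2), one has (1/(4·√(2π)·√n))·(n^{1−j/n}·κ(j/n))^n ≤ N^{n−j}/(n−j)! ≤ (1/√(2π))·(n^{1−j/n}·κ(j/n))^n. -/
/-!
Write `m = n - j`. The κ-expression collapses to `(n² e / (2m))^m`, while Stirling's bounds
`√(2πm) (m/e)^m ≤ m! ≤ e √m (m/e)^m` place `N^m / m!` between `(N e / m)^m / (e √m)` and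
`(N e / m)^m / √(2πm)`. As `N = n(n-1)/2`, the two bases differ by the factor `1 + 1/(n-1)`,
whose `m`-th power lies in `[1, e]` because `m ≤ n - 1`.
-/

noncomputable def kappa (x : ℝ) : ℝ := (Real.exp 1 / 2) ^ (1 - x) * (1 - x) ^ (-(1 - x))

open Real Nat

theorem factorial_le_exp_one_mul_sqrt_mul_pow {n : ℕ} (hn : n ≠ 0) :
    (n ! : ℝ) ≤ exp 1 * √n * (n / exp 1) ^ n := by
  obtain ⟨k, rfl⟩ := Nat.exists_eq_succ_of_ne_zero hn
  have h : Stirling.stirlingSeq (k + 1) ≤ exp 1 / √2 := by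
    simpa [Stirling.stirlingSeq_one] using Stirling.stirlingSeq'_antitone (Nat.zero_le k)
  rw [Stirling.stirlingSeq, div_le_iff₀ (by positivity)] at h
  refine h.trans_eq ?_
  rw [Real.sqrt_mul zero_le_two]
  field_simp

lemma pow_div_factorial_le {a : ℝ} (ha : 0 ≤ a) {m : ℕ} (hm : m ≠ 0) :
    a ^ m / m ! ≤ (a * exp 1 / m) ^ m / √(2 * π * m) := by
  calc a ^ m / m ! ≤ a ^ m / (√(2 * π * m) * (m / exp 1) ^ m) := by
        gcongr
        exact Stirling.le_factorial_stirling m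
    _ = (a * exp 1 / m) ^ m / √(2 * π * m) := by
        rw [← div_div_eq_mul_div, div_pow]
        ring

lemma div_le_pow_div_factorial {a : ℝ} (ha : 0 ≤ a) {m : ℕ} (hm : m ≠ 0) :
    (a * exp 1 / m) ^ m / (exp 1 * √m) ≤ a ^ m / m ! := by
  calc (a * exp 1 / m) ^ m / (exp 1 * √m) = a ^ m / (exp 1 * √m * (m / exp 1) ^ m) := by
        rw [← div_div_eq_mul_div, div_pow]
        ring
    _ ≤ a ^ m / m ! := by
        gcongr
        exact factorial_le_exp_one_mul_sqrt_mul_pow hm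

lemma rpow_one_sub_mul_kappa {a x : ℝ} (ha : 0 ≤ a) (hx : x < 1) :
    a ^ (1 - x) * kappa x = (a * exp 1 / (2 * (1 - x))) ^ (1 - x) := by
  have hx' : 0 < 1 - x := by linarith
  rw [kappa, Real.rpow_neg hx'.le, Real.div_rpow (x := a * exp 1) (by positivity) (by positivity),
    Real.mul_rpow ha (exp_pos 1).le, Real.mul_rpow zero_le_two hx'.le,
    Real.div_rpow (exp_pos 1).le zero_le_two]
  ring

lemma rpow_mul_kappa_pow_eq {n m j : ℕ} (hjm : j + m = n) (hm : m ≠ 0) :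
    ((n : ℝ) ^ (1 - (j : ℝ) / n) * kappa ((j : ℝ) / n)) ^ n =
      ((n : ℝ) ^ 2 * exp 1 / (2 * m)) ^ m := by
  have hm' : (0 : ℝ) < m := by exact_mod_cast Nat.pos_of_ne_zero hm
  have hn : (0 : ℝ) < n := by rw [← hjm]; push_cast; positivity
  have hx : 1 - (j : ℝ) / n = m / n := by
    rw [← hjm]; push_cast; field_simp; ring
  rw [rpow_one_sub_mul_kappa hn.le (by linarith [div_pos hm' hn]), hx,
    ← Real.rpow_natCast _ n, ← Real.rpow_mul (by positivity), div_mul_cancel₀ _ hn.ne',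
    Real.rpow_natCast]
  congr 1
  field_simp

lemma one_add_inv_pow_le_exp_one {k m : ℕ} (hmk : m ≤ k) : (1 + (k : ℝ)⁻¹) ^ m ≤ exp 1 :=
  (pow_le_pow_right₀ (le_add_of_nonneg_right (by positivity)) hmk).trans one_add_inv_pow_le_exp

lemma exp_one_sq_le_four_mul_sqrt_two_pi : exp 1 ^ 2 ≤ 4 * √(2 * π) := by
  have he : exp 1 ^ 2 ≤ 2.7182818286 ^ 2 := by gcongr; exact exp_one_lt_d9.le
  have hs : (2.5 : ℝ) ≤ √(2 * π) := Real.le_sqrt_of_sq_le (by nlinarith [pi_gt_d2])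
  nlinarith

lemma cast_choose_two_le_sq_div_two (n : ℕ) : (n.choose 2 : ℝ) ≤ n ^ 2 / 2 := by
  rw [Nat.cast_choose_two]
  gcongr
  nlinarith

lemma choose_two_pow_div_factorial_le {n m : ℕ} (hm : m ≠ 0) :
    (n.choose 2 : ℝ) ^ m / m ! ≤ 1 / √(2 * π) * ((n : ℝ) ^ 2 * exp 1 / (2 * m)) ^ m := by
  have hN0 : (0 : ℝ) ≤ n.choose 2 := by positivity
  calc (n.choose 2 : ℝ) ^ m / m ! ≤ (n.choose 2 * exp 1 / m) ^ m / √(2 * π * m) :=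
        pow_div_factorial_le hN0 hm
    _ ≤ (n.choose 2 * exp 1 / m) ^ m / √(2 * π) := by
        refine div_le_div_of_nonneg_left (by positivity) (by positivity) (Real.sqrt_le_sqrt ?_)
        exact le_mul_of_one_le_right (by positivity) (by exact_mod_cast Nat.one_le_iff_ne_zero.2 hm)
    _ ≤ 1 / √(2 * π) * ((n : ℝ) ^ 2 / 2 * exp 1 / m) ^ m := by
        rw [one_div_mul_eq_div]
        gcongr
        exact cast_choose_two_le_sq_div_two n
    _ = 1 / √(2 * π) * ((n : ℝ) ^ 2 * exp 1 / (2 * m)) ^ m := by ring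

lemma le_choose_two_pow_div_factorial {n m : ℕ} (hm : m ≠ 0) (hmn : m < n) :
    1 / (4 * √(2 * π) * √n) * ((n : ℝ) ^ 2 * exp 1 / (2 * m)) ^ m ≤
      (n.choose 2 : ℝ) ^ m / m ! := by
  set A := (n.choose 2 : ℝ) * exp 1 / m with hA_def
  have hn : (1 : ℝ) < n := by exact_mod_cast (show 1 < n by omega)
  have hsplit : (n : ℝ) ^ 2 * exp 1 / (2 * m) = A * (1 + ((n - 1 : ℕ) : ℝ)⁻¹) := by
    rw [hA_def, Nat.cast_choose_two, Nat.cast_pred (by omega)]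
    field_simp [show (n : ℝ) - 1 ≠ 0 by linarith]
    ring
  have hconst : exp 1 * (exp 1 * √m) ≤ 4 * √(2 * π) * √n := by
    rw [← mul_assoc, ← sq]
    exact mul_le_mul exp_one_sq_le_four_mul_sqrt_two_pi
      (Real.sqrt_le_sqrt (by exact_mod_cast hmn.le)) (by positivity) (by positivity)
  calc 1 / (4 * √(2 * π) * √n) * ((n : ℝ) ^ 2 * exp 1 / (2 * m)) ^ m
      = A ^ m * ((1 + ((n - 1 : ℕ) : ℝ)⁻¹) ^ m / (4 * √(2 * π) * √n)) := by
        rw [hsplit, mul_pow]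
        ring
    _ ≤ A ^ m * (exp 1 / (4 * √(2 * π) * √n)) := by
        gcongr
        exact one_add_inv_pow_le_exp_one (by omega)
    _ ≤ A ^ m * (1 / (exp 1 * √m)) := by
        refine mul_le_mul_of_nonneg_left ?_ (by positivity)
        rw [div_le_div_iff₀ (by positivity) (by positivity)]
        linarith
    _ = A ^ m / (exp 1 * √m) := by ring
    _ ≤ (n.choose 2 : ℝ) ^ m / m ! := div_le_pow_div_factorial (by positivity) hm

theorem stmt_13_general (n j : ℕ) (hj1 : 1 ≤ j) (hj2 : j ≤ n - 2) :
    1 / (4 * Real.sqrt (2 * Real.pi) * Real.sqrt n) *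
        ((n : ℝ) ^ (1 - (j : ℝ) / n) * kappa ((j : ℝ) / n)) ^ n ≤
      (Nat.choose n 2 : ℝ) ^ (n - j) / ((n - j).factorial : ℝ) ∧
    (Nat.choose n 2 : ℝ) ^ (n - j) / ((n - j).factorial : ℝ) ≤
      (1 / Real.sqrt (2 * Real.pi)) *
        ((n : ℝ) ^ (1 - (j : ℝ) / n) * kappa ((j : ℝ) / n)) ^ n := by
  rw [rpow_mul_kappa_pow_eq (show j + (n - j) = n by omega) (by omega)]
  exact ⟨le_choose_two_pow_div_factorial (by omega) (by omega),
    choose_two_pow_div_factorial_le (by omega)⟩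

theorem stmt_13 (n j : ℕ) (hn : 3 ≤ n) (hj1 : 1 ≤ j) (hj2 : j ≤ n - 2) :
    1 / (4 * Real.sqrt (2 * Real.pi) * Real.sqrt n) *
        ((n : ℝ) ^ (1 - (j : ℝ) / n) * kappa ((j : ℝ) / n)) ^ n ≤
      (Nat.choose n 2 : ℝ) ^ (n - j) / ((n - j).factorial : ℝ) ∧
    (Nat.choose n 2 : ℝ) ^ (n - j) / ((n - j).factorial : ℝ) ≤
      (1 / Real.sqrt (2 * Real.pi)) *
        ((n : ℝ) ^ (1 - (j : ℝ) / n) * kappa ((j : ℝ) / n)) ^ n :=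
  stmt_13_general n j hj1 hj2
end

section
/- For every pair of integers n, j with n ≥ 1 and 1 ≤ j ≤ n−1, one has a(n,j)·n^{−n} ≤ √j·ν(j/n)^n. -/
/-!
The alternating sum defining `stirling2` satisfies the recurrence of the Stirling numbers of the
second kind, and induction on it gives `S(n, j) ≤ C(n-1, j-1) j^(n-j)`. With `d = n - j` this
bounds `a(n, j) n^(-n)` by `n!² j^(d+1) / (n j! d!² n^n)`. Writing `m! = s_m √(2m) (m/e)^m` with
the Stirling sequence `s`, this bound is exactly `√j ν(j/n)^n` times `(s_n / s_d)² / (√2 d s_j)`,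
and that factor is at most `1` because `s` decreases on positive integers and `s_j ≥ √π ≥ 1`.
-/

noncomputable def stirling2 (n j : ℕ) : ℝ :=
  (1 / (Nat.factorial j : ℝ)) *
    ∑ i ∈ Finset.range (j + 1), (-1 : ℝ) ^ i * (Nat.choose j i : ℝ) * ((j - i : ℕ) : ℝ) ^ n

noncomputable def a (n j : ℕ) : ℝ :=
  (Nat.choose n j : ℝ) * (Nat.factorial j : ℝ) * stirling2 n j

noncomputable def varphi (x : ℝ) : ℝ := x ^ (-x) * (1 - x) ^ (-(1 - x))

noncomputable def nu (x : ℝ) : ℝ := x * Real.exp (-x) * varphi x ^ 2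

open Finset Nat Real Stirling

noncomputable def surjCount (n j : ℕ) : ℝ :=
  ∑ i ∈ range (j + 1), (-1 : ℝ) ^ i * (j.choose i : ℝ) * ((j - i : ℕ) : ℝ) ^ n

lemma surjCount_zero_left (j : ℕ) : surjCount 0 j = if j = 0 then 1 else 0 := by
  have h := congrArg (Int.cast : ℤ → ℝ) (Int.alternating_sum_range_choose (n := j))
  push_cast at h
  simpa [surjCount] using h

lemma surjCount_succ_zero (n : ℕ) : surjCount (n + 1) 0 = 0 := by
  simp [surjCount]

lemma surjCount_succ_succ (n j : ℕ) :
    surjCount (n + 1) (j + 1) = (j + 1) * (surjCount n (j + 1) + surjCount n j) := by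
  set f : ℕ → ℝ := fun i ↦
    (-1 : ℝ) ^ i * ((j + 1).choose i : ℝ) * ((j + 1 - i : ℕ) : ℝ) ^ n
  have hsplit : surjCount (n + 1) (j + 1) =
      (j + 1) * surjCount n (j + 1) - ∑ i ∈ range (j + 2), i * f i := by
    rw [surjCount, surjCount, mul_sum, ← sum_sub_distrib]
    refine sum_congr rfl fun i hi ↦ ?_
    simp only [f]
    rw [Nat.cast_sub (by simpa [Nat.lt_succ_iff] using hi), pow_succ]
    push_cast
    ring
  have hshift : ∑ i ∈ range (j + 2), i * f i = -((j + 1) * surjCount n j) := by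
    rw [sum_range_succ', surjCount, mul_sum, ← sum_neg_distrib]
    simp only [Nat.cast_zero, zero_mul, add_zero]
    refine sum_congr rfl fun i _ ↦ ?_
    have hc : ((i + 1 : ℕ) : ℝ) * ((j + 1).choose (i + 1) : ℝ) =
        (j + 1) * (j.choose i : ℝ) := by
      rw [mul_comm]
      exact_mod_cast (Nat.add_one_mul_choose_eq j i).symm
    simp only [f, Nat.add_sub_add_right, pow_succ]
    linear_combination (-(-1 : ℝ) ^ i * ((j - i : ℕ) : ℝ) ^ n) * hc
  rw [hsplit, hshift]
  ring

lemma surjCount_eq_factorial_mul_stirlingSecond (n j : ℕ) :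
    surjCount n j = j ! * stirlingSecond n j := by
  induction n generalizing j with
  | zero => cases j <;> simp [surjCount_zero_left]
  | succ n ih =>
    cases j with
    | zero => simp [surjCount_succ_zero]
    | succ j =>
      rw [surjCount_succ_succ, ih, ih, stirlingSecond_succ_succ, factorial_succ]
      push_cast
      ring

lemma stirling2_eq_stirlingSecond (n j : ℕ) : stirling2 n j = stirlingSecond n j := by
  rw [stirling2, ← surjCount, surjCount_eq_factorial_mul_stirlingSecond]
  field_simp

lemma Nat.stirlingSecond_succ_succ_le (n k : ℕ) :
    stirlingSecond (n + 1) (k + 1) ≤ n.choose k * (k + 1) ^ (n - k) := by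
  induction n generalizing k with
  | zero => cases k <;> simp [stirlingSecond]
  | succ n ih =>
    cases k with
    | zero => simp [stirlingSecond_one_right]
    | succ k =>
      have hfirst : (k + 2) * stirlingSecond (n + 1) (k + 2) ≤
          n.choose (k + 1) * (k + 2) ^ (n - k) := by
        rcases le_or_gt (k + 1) n with hkn | hkn
        · calc (k + 2) * stirlingSecond (n + 1) (k + 2)
              ≤ (k + 2) * (n.choose (k + 1) * (k + 2) ^ (n - (k + 1))) :=
                Nat.mul_le_mul_left _ (ih _)
            _ = n.choose (k + 1) * (k + 2) ^ (n - k) := by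
              rw [show n - k = n - (k + 1) + 1 by omega, pow_succ]
              ring
        · simp [stirlingSecond_eq_zero_of_lt (by omega : n + 1 < k + 2)]
      have hsecond : stirlingSecond (n + 1) (k + 1) ≤ n.choose k * (k + 2) ^ (n - k) :=
        (ih k).trans (Nat.mul_le_mul_left _ (Nat.pow_le_pow_left (by omega) _))
      rw [stirlingSecond_succ_succ, choose_succ_succ', Nat.add_sub_add_right]
      calc _ ≤ n.choose (k + 1) * (k + 2) ^ (n - k) + n.choose k * (k + 2) ^ (n - k) :=
            Nat.add_le_add hfirst hsecond
        _ = _ := by ring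

lemma a_add_le (j d : ℕ) (hj : j ≠ 0) :
    a (j + d) j ≤ ((j + d)! : ℝ) ^ 2 * j ^ (d + 1) / ((j + d) * j ! * d ! ^ 2) := by
  obtain ⟨k, rfl⟩ : ∃ k, j = k + 1 := ⟨j - 1, by omega⟩
  have hS : (stirlingSecond (k + d + 1) (k + 1) : ℝ) ≤ (k + d).choose k * (k + 1) ^ d := by
    have h := Nat.stirlingSecond_succ_succ_le (k + d) k
    rw [Nat.add_sub_cancel_left] at h
    exact_mod_cast h
  rw [a, stirling2_eq_stirlingSecond, show k + 1 + d = k + d + 1 by omega]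
  calc _ ≤ ((k + d + 1).choose (k + 1) : ℝ) * (k + 1)! * ((k + d).choose k * (k + 1) ^ d) := by
        gcongr
    _ = _ := by
      rw [show k + d + 1 = (k + 1) + d by omega, Nat.cast_add_choose, Nat.cast_add_choose,
        show k + 1 + d = (k + d) + 1 by omega]
      simp only [factorial_succ]
      push_cast
      field_simp
      ring

lemma div_rpow_neg_div_pow (m N : ℕ) (hN : N ≠ 0) :
    (((m : ℝ) / N) ^ (-((m : ℝ) / N))) ^ N = ((N : ℝ) / m) ^ m := by
  rw [← rpow_mul_natCast (by positivity), neg_mul, div_mul_cancel₀ _ (by exact_mod_cast hN),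
    rpow_neg (by positivity), rpow_natCast, ← inv_pow, inv_div]

lemma nu_div_pow (j d : ℕ) (hn : j + d ≠ 0) :
    nu (j / (j + d : ℕ)) ^ (j + d) = ((j : ℝ) / (j + d : ℕ)) ^ (j + d) * exp (-j) *
      ((((j + d : ℕ) : ℝ) / j) ^ j * (((j + d : ℕ) : ℝ) / d) ^ d) ^ 2 := by
  have hcompl : 1 - (j : ℝ) / (j + d : ℕ) = d / (j + d : ℕ) := by
    have : ((j + d : ℕ) : ℝ) ≠ 0 := by exact_mod_cast hn
    field_simp
    push_cast
    ring
  have hexp : exp (-((j : ℝ) / (j + d : ℕ))) ^ (j + d) = exp (-j) := by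
    rw [← exp_nat_mul]
    congr 1
    field_simp
  rw [nu, varphi, hcompl, mul_pow, mul_pow, hexp, ← pow_mul, mul_comm 2, pow_mul, mul_pow,
    div_rpow_neg_div_pow _ _ hn, div_rpow_neg_div_pow _ _ hn]

lemma factorial_eq_stirlingSeq_mul {m : ℕ} (hm : m ≠ 0) :
    (m ! : ℝ) = stirlingSeq m * (√(2 * m) * (m / exp 1) ^ m) := by
  rw [stirlingSeq, div_mul_cancel₀]
  positivity

lemma stirlingSeq_pos {m : ℕ} (hm : m ≠ 0) : 0 < stirlingSeq m := by
  obtain ⟨k, rfl⟩ : ∃ k, m = k + 1 := ⟨m - 1, by omega⟩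
  exact stirlingSeq'_pos k

lemma factorial_ratio_div_pow_eq_nu_pow_mul (j d : ℕ) (hj : j ≠ 0) (hd : d ≠ 0) :
    ((j + d)! : ℝ) ^ 2 * j ^ (d + 1) / ((j + d) * j ! * d ! ^ 2) /
        ((j + d : ℕ) : ℝ) ^ (j + d) =
      √j * nu (j / (j + d : ℕ)) ^ (j + d) *
        ((stirlingSeq (j + d) / stirlingSeq d) ^ 2 / (√2 * d * stirlingSeq j)) := by
  have hn : j + d ≠ 0 := by omega
  have hsj := stirlingSeq_pos hj
  have hsd := stirlingSeq_pos hd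
  have hsn := stirlingSeq_pos hn
  have hj' : (0 : ℝ) < j := by positivity
  have hd' : (0 : ℝ) < d := by positivity
  rw [nu_div_pow j d hn, factorial_eq_stirlingSeq_mul hj, factorial_eq_stirlingSeq_mul hd,
    factorial_eq_stirlingSeq_mul hn, exp_neg, ← exp_one_pow]
  push_cast
  simp only [mul_pow, sq_sqrt (by positivity : (0 : ℝ) ≤ 2 * (j + d)),
    sq_sqrt (by positivity : (0 : ℝ) ≤ 2 * d)]
  rw [sqrt_mul' _ hj'.le]
  -- with `j = r²` the identity becomes one between rational functions
  have hsq : (j : ℝ) = √j ^ 2 := (sq_sqrt hj'.le).symm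
  have hr : 0 < √(j : ℝ) := sqrt_pos.mpr hj'
  generalize √(j : ℝ) = r at hsq hr ⊢
  rw [hsq]
  simp only [div_pow, ← pow_mul]
  field_simp
  ring

lemma stirlingSeq_ratio_le_one (j d : ℕ) (hj : j ≠ 0) (hd : d ≠ 0) :
    (stirlingSeq (j + d) / stirlingSeq d) ^ 2 / (√2 * d * stirlingSeq j) ≤ 1 := by
  obtain ⟨e, rfl⟩ : ∃ e, d = e + 1 := ⟨d - 1, by omega⟩
  have hdecr : stirlingSeq (j + (e + 1)) ≤ stirlingSeq (e + 1) :=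
    stirlingSeq'_antitone (show e ≤ j + e by omega)
  have hratio : stirlingSeq (j + (e + 1)) / stirlingSeq (e + 1) ≤ 1 :=
    div_le_one_of_le₀ hdecr (stirlingSeq'_pos e).le
  have hsj : 1 ≤ stirlingSeq j :=
    (one_le_sqrt.mpr (by linarith [pi_gt_three])).trans (sqrt_pi_le_stirlingSeq hj)
  have hden : 1 ≤ √2 * ((e + 1 : ℕ) : ℝ) * stirlingSeq j := by
    have h2 : 1 ≤ √(2 : ℝ) := one_le_sqrt.mpr (by norm_num)
    have he : (1 : ℝ) ≤ ((e + 1 : ℕ) : ℝ) := by norm_cast; omega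
    exact one_le_mul_of_one_le_of_one_le (one_le_mul_of_one_le_of_one_le h2 he) hsj
  have hratio_nonneg : 0 ≤ stirlingSeq (j + (e + 1)) / stirlingSeq (e + 1) :=
    div_nonneg (stirlingSeq_pos (by omega)).le (stirlingSeq'_pos e).le
  exact div_le_one_of_le₀ ((pow_le_one₀ hratio_nonneg hratio).trans hden)
    (zero_le_one.trans hden)

theorem stmt_16_general (n j : ℕ) (hj1 : 1 ≤ j) (hj2 : j ≤ n - 1) :
    a n j * (n : ℝ) ^ (-(n : ℝ)) ≤ Real.sqrt j * nu ((j : ℝ) / n) ^ n := by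
  obtain ⟨d, rfl⟩ : ∃ d, n = j + d := ⟨n - j, by omega⟩
  have hj : j ≠ 0 := by omega
  have hd : d ≠ 0 := by omega
  have hnu : 0 ≤ √(j : ℝ) * nu (j / (j + d : ℕ)) ^ (j + d) := by
    unfold nu varphi
    positivity
  rw [rpow_neg (Nat.cast_nonneg _), rpow_natCast, ← div_eq_mul_inv]
  calc a (j + d) j / ((j + d : ℕ) : ℝ) ^ (j + d)
      ≤ ((j + d)! : ℝ) ^ 2 * j ^ (d + 1) / ((j + d) * j ! * d ! ^ 2) /
          ((j + d : ℕ) : ℝ) ^ (j + d) := by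
        gcongr
        exact a_add_le j d hj
    _ = _ := factorial_ratio_div_pow_eq_nu_pow_mul j d hj hd
    _ ≤ _ := mul_le_of_le_one_right hnu (stirlingSeq_ratio_le_one j d hj hd)

theorem stmt_16 (n j : ℕ) (hn : 1 ≤ n) (hj1 : 1 ≤ j) (hj2 : j ≤ n - 1) :
    a n j * (n : ℝ) ^ (-(n : ℝ)) ≤ Real.sqrt j * nu ((j : ℝ) / n) ^ n :=
  stmt_16_general n j hj1 hj2
end
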